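/- arXiv:2602.17983 — 2 statements merged into one kernel-verified Lean document; each statement's English description precedes it below -/
import Mathlib

section
/- Let P be an r-saturated weakly graded poset whose rank map r takes values between 1 and n. Suppose every quasi-bowtie x₁y₁x₂y₂ in P with r(x₁) = r(x₂) < r(y₁) = r(y₂) has a center. Then P is bowtie free. -/
/-- A poset is *bowtie free* if every quasi-bowtie `x₁ y₁ x₂ y₂` (i.e. `xᵢ < y_j` for all
`i, j ∈ {1,2}`) has a *center*, i.e. an element `z` with `xᵢ ≤ z ≤ y_j` for all `i, j`. -/
def BowtieFree (P : Type*) [PartialOrder P] : Prop :=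
  ∀ x₁ y₁ x₂ y₂ : P, x₁ < y₁ → x₁ < y₂ → x₂ < y₁ → x₂ < y₂ →
    ∃ z : P, x₁ ≤ z ∧ x₂ ≤ z ∧ z ≤ y₁ ∧ z ≤ y₂

/-- A weakly graded poset `P` with rank map `r` taking values between `1` and `n` is
*r-saturated* if for every `p ∈ P` and all integers `m₁, m₂` with `n ≥ m₁ > r p > m₂ ≥ 1`,
there exist `p₁ ≥ p ≥ p₂` with `r p₁ = m₁` and `r p₂ = m₂`. -/
def RSaturated {P : Type*} [PartialOrder P] (r : P → ℤ) (n : ℤ) : Prop :=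
  ∀ (p : P) (m₁ m₂ : ℤ), m₁ ≤ n → r p < m₁ → m₂ < r p → 1 ≤ m₂ →
    ∃ p₁ p₂ : P, p ≤ p₁ ∧ p₂ ≤ p ∧ r p₁ = m₁ ∧ r p₂ = m₂

/-!
Saturation lets us move one vertex of a quasi-bowtie `a b; c d` to any rank in range. If the
tops are levelled and `r a < r b`, lower `b` to some `b' ≤ b` of rank `r a` and take a center `z`
of the levelled bowtie `a b'; c d`. Either `z` is already a center of `a b; c d`, or `a ≤ z` and
`b z; c d` is a quasi-bowtie whose bottoms are strictly closer to the tops, so induction applies.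
The dual argument in `Pᵒᵈ` (with rank `-r`) levels the tops.
-/

open OrderDual

section

variable {P : Type*} [PartialOrder P]

def IsQuasiBowtie (a b c d : P) : Prop :=
  a < c ∧ a < d ∧ b < c ∧ b < d

def HasCenter (a b c d : P) : Prop :=
  ∃ z, a ≤ z ∧ b ≤ z ∧ z ≤ c ∧ z ≤ d

theorem IsQuasiBowtie.swap_bot {a b c d : P} (h : IsQuasiBowtie a b c d) :
    IsQuasiBowtie b a c d :=
  ⟨h.2.2.1, h.2.2.2, h.1, h.2.1⟩

theorem HasCenter.swap_bot {a b c d : P} (h : HasCenter a b c d) : HasCenter b a c d :=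
  let ⟨z, ha, hb, hc, hd⟩ := h; ⟨z, hb, ha, hc, hd⟩

theorem HasCenter.of_le_left {a a' b c d : P} (h : HasCenter a' b c d) (ha : a ≤ a') :
    HasCenter a b c d :=
  let ⟨z, ha', hb, hc, hd⟩ := h; ⟨z, ha.trans ha', hb, hc, hd⟩

theorem isQuasiBowtie_toDual_iff {a b c d : P} :
    IsQuasiBowtie (toDual c) (toDual d) (toDual a) (toDual b) ↔ IsQuasiBowtie a b c d := by
  simp only [IsQuasiBowtie, toDual_lt_toDual]
  tauto

theorem hasCenter_toDual_iff {a b c d : P} :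
    HasCenter (toDual c) (toDual d) (toDual a) (toDual b) ↔ HasCenter a b c d := by
  simp only [HasCenter, OrderDual.exists, toDual_le_toDual]
  exact exists_congr fun _ => by tauto

variable {r : P → ℤ}

theorem RSaturated.exists_le_rank_eq {n : ℤ} (hsat : RSaturated r n) (hmono : StrictMono r)
    {b c : P} (hbc : b < c) (hc : r c ≤ n) {m : ℤ} (hm : 1 ≤ m) (hmb : m < r b) :
    ∃ b' ≤ b, r b' = m := by
  obtain ⟨-, b', -, hb'b, -, hb'⟩ :=
    hsat b (r b + 1) m (by linarith [hmono hbc]) (lt_add_one _) hmb hm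
  exact ⟨b', hb'b, hb'⟩

theorem RSaturated.exists_ge_rank_eq {n : ℤ} (hsat : RSaturated r n) (hmono : StrictMono r)
    {a b : P} (hab : a < b) (ha : 1 ≤ r a) {m : ℤ} (hbm : r b < m) (hm : m ≤ n) :
    ∃ b' ≥ b, r b' = m := by
  obtain ⟨b', -, hbb', -, hb', -⟩ :=
    hsat b m (r b - 1) hm hbm (sub_one_lt _) (by linarith [hmono hab])
  exact ⟨b', hbb', hb'⟩

theorem hasCenter_of_levelled_bot (hmono : StrictMono r) {c d : P}
    (hdown : ∀ a b : P, b < c → r a < r b → ∃ b' ≤ b, r b' = r a)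
    (hlev : ∀ a b, IsQuasiBowtie a b c d → r a = r b → HasCenter a b c d)
    {a b : P} (hq : IsQuasiBowtie a b c d) : HasCenter a b c d := by
  induction hN : (2 * r c - r a - r b).toNat using Nat.strong_induction_on generalizing a b with
  | _ N ih =>
  wlog hab : r a ≤ r b generalizing a b
  · exact (this hq.swap_bot (by omega) (le_of_not_ge hab)).swap_bot
  obtain ⟨hac, had, hbc, hbd⟩ := hq
  obtain hab | hab := hab.eq_or_lt
  · exact hlev a b ⟨hac, had, hbc, hbd⟩ hab
  obtain ⟨b', hb'b, hb'⟩ := hdown a b hbc hab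
  obtain ⟨z, haz, hb'z, hzc, hzd⟩ :=
    hlev a b' ⟨hac, had, hb'b.trans_lt hbc, hb'b.trans_lt hbd⟩ hb'.symm
  obtain rfl | hzc := hzc.eq_or_lt
  · exact ⟨z, hac.le, hbc.le, le_rfl, hzd⟩
  obtain rfl | hzd := hzd.eq_or_lt
  · exact ⟨z, had.le, hbd.le, hzc.le, le_rfl⟩
  obtain hz | hz := (hmono.monotone hb'z).eq_or_lt
  · -- `b'` and `z ≥ b'` have equal rank, so `z = b' ≤ b`
    have hzb : z ≤ b := (hb'z.eq_of_not_lt fun h => (hmono h).ne hz) ▸ hb'b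
    exact (hlev b b ⟨hbc, hbd, hbc, hbd⟩ rfl).of_le_left (haz.trans hzb)
  · have hsmaller : (2 * r c - r b - r z).toNat < N := by
      have := hmono hzc
      have := hmono hbc
      omega
    exact (ih _ hsmaller ⟨hbc, hbd, hzc, hzd⟩ rfl).swap_bot.of_le_left haz

theorem hasCenter_of_levelled_top (hmono : StrictMono r) {a b : P}
    (hup : ∀ c d : P, a < c → r c < r d → ∃ c' ≥ c, r c' = r d)
    (hlev : ∀ c d, IsQuasiBowtie a b c d → r c = r d → HasCenter a b c d)
    {c d : P} (hq : IsQuasiBowtie a b c d) : HasCenter a b c d := by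
  have hmono_dual : StrictMono fun x : Pᵒᵈ => -r (ofDual x) := fun _ _ h => neg_lt_neg (hmono h)
  refine hasCenter_toDual_iff.mp <|
    hasCenter_of_levelled_bot hmono_dual (fun c' d' hd'a hrc' => ?_) (fun c' d' hq' hr => ?_)
      (isQuasiBowtie_toDual_iff.mpr hq)
  · obtain ⟨d'', hd'', hr⟩ := hup (ofDual d') (ofDual c') hd'a (neg_lt_neg_iff.mp hrc')
    exact ⟨toDual d'', hd'', congrArg Neg.neg hr⟩
  · exact (hasCenter_toDual_iff (c := ofDual c') (d := ofDual d')).mpr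
      (hlev _ _ (isQuasiBowtie_toDual_iff.mp hq') (neg_inj.mp hr))

end

/-- Let `P` be an `r`-saturated weakly graded poset whose rank map `r`
takes values between `1` and `n`.  Suppose every quasi-bowtie `x₁ y₁ x₂ y₂` in `P` with
`r x₁ = r x₂ < r y₁ = r y₂` has a center.  Then `P` is bowtie free. -/
theorem bowtieFree_of_levelled_bowties {P : Type*} [PartialOrder P] (n : ℤ) (r : P → ℤ)
    (hmono : StrictMono r) (hlo : ∀ p : P, 1 ≤ r p) (hhi : ∀ p : P, r p ≤ n)
    (hsat : RSaturated r n)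
    (h : ∀ x₁ y₁ x₂ y₂ : P, x₁ < y₁ → x₁ < y₂ → x₂ < y₁ → x₂ < y₂ →
      r x₁ = r x₂ → r x₁ < r y₁ → r y₁ = r y₂ →
      ∃ z : P, x₁ ≤ z ∧ x₂ ≤ z ∧ z ≤ y₁ ∧ z ≤ y₂) :
    BowtieFree P := by
  intro a c b d hac had hbc hbd
  refine hasCenter_of_levelled_top hmono
    (fun c d hac' hcd => hsat.exists_ge_rank_eq hmono hac' (hlo a) hcd (hhi d))
    (fun c d hq hcd => ?_) ⟨hac, had, hbc, hbd⟩
  refine hasCenter_of_levelled_bot hmono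
    (fun a b hbc hab => hsat.exists_le_rank_eq hmono hbc (hhi c) (hlo a) hab)
    (fun a b ⟨hac, had, hbc, hbd⟩ hab => h a c b d hac had hbc hbd hab (hmono hac) hcd) hq
end

section
/- Let P be an r-saturated weakly graded poset whose rank map r takes values between 1 and n. Suppose: (1) P is bowtie free; and (2) for every integer k with 1 ≤ k ≤ n−1, any three pairwise upper-bounded elements of P of rank k have a common upper bound. Then P is upward flag. -/
/-- A poset is *upward flag* if any three pairwise upper-bounded elements have a common
upper bound. -/
def UpwardFlag (P : Type*) [PartialOrder P] : Prop :=
  ∀ p₁ p₂ p₃ : P, (∃ q, p₁ ≤ q ∧ p₂ ≤ q) → (∃ q, p₂ ≤ q ∧ p₃ ≤ q) →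
    (∃ q, p₁ ≤ q ∧ p₃ ≤ q) → ∃ q, p₁ ≤ q ∧ p₂ ≤ q ∧ p₃ ≤ q

/-! Downward induction on the smallest rank `k` occurring in a pairwise upper-bounded triple
`p₁, p₂, p₃`, say `r p₁ = k`. Saturation gives `a ≤ p₃` of rank `k`, and `p₁, p₂, a` have a
common upper bound `W`: by the hypothesis on rank `k` if `r p₂ = k`, and otherwise by the case
`r p₂ = k` applied to `p₁, a, p₂`. If `qᵢ₃` bounds `pᵢ` and `p₃`, centers `zᵢ` of the
quasi-bowties `{pᵢ, a} < {W, qᵢ₃}` form with `p₃` a pairwise upper-bounded triple above rank `k`,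
and a common upper bound of `z₁, z₂, p₃` bounds `p₁, p₂, p₃`. Saturation gives nothing below
elements of rank `n`, but these are maximal. -/

section

variable {P : Type*} [PartialOrder P]

theorem BowtieFree.exists_center (h : BowtieFree P) {x₁ x₂ y₁ y₂ : P} (h₁₁ : x₁ ≤ y₁)
    (h₁₂ : x₁ ≤ y₂) (h₂₁ : x₂ ≤ y₁) (h₂₂ : x₂ ≤ y₂) :
    ∃ z, x₁ ≤ z ∧ x₂ ≤ z ∧ z ≤ y₁ ∧ z ≤ y₂ := by
  rcases h₁₁.eq_or_lt with rfl | l₁₁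
  · exact ⟨x₁, le_rfl, h₂₁, le_rfl, h₁₂⟩
  rcases h₁₂.eq_or_lt with rfl | l₁₂
  · exact ⟨x₁, le_rfl, h₂₂, h₁₁, le_rfl⟩
  rcases h₂₁.eq_or_lt with rfl | l₂₁
  · exact ⟨x₂, h₁₁, le_rfl, le_rfl, h₂₂⟩
  rcases h₂₂.eq_or_lt with rfl | l₂₂
  · exact ⟨x₂, h₁₂, le_rfl, h₂₁, le_rfl⟩
  exact h x₁ y₁ x₂ y₂ l₁₁ l₁₂ l₂₁ l₂₂

theorem StrictMono.eq_of_le_of_apply_le {r : P → ℤ} (hr : StrictMono r) {x y : P} (hxy : x ≤ y)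
    (h : r y ≤ r x) : x = y :=
  eq_of_le_of_not_lt hxy fun hlt => (hr hlt).not_ge h

structure IsSaturatedRankMap (r : P → ℤ) (n : ℤ) : Prop where
  strictMono : StrictMono r
  one_le_rank : ∀ p, 1 ≤ r p
  rank_le : ∀ p, r p ≤ n
  saturated : RSaturated r n

def UpwardFlagAtRank (r : P → ℤ) (k : ℤ) : Prop :=
  ∀ p₁ p₂ p₃ : P, r p₁ = k → r p₂ = k → r p₃ = k →
    (∃ q, p₁ ≤ q ∧ p₂ ≤ q) → (∃ q, p₂ ≤ q ∧ p₃ ≤ q) → (∃ q, p₁ ≤ q ∧ p₃ ≤ q) →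
    ∃ q, p₁ ≤ q ∧ p₂ ≤ q ∧ p₃ ≤ q

def UpwardFlagAbove (r : P → ℤ) (k : ℤ) : Prop :=
  ∀ p₁ p₂ p₃ : P, k < r p₁ → k < r p₂ → k < r p₃ →
    (∃ q, p₁ ≤ q ∧ p₂ ≤ q) → (∃ q, p₂ ≤ q ∧ p₃ ≤ q) → (∃ q, p₁ ≤ q ∧ p₃ ≤ q) →
    ∃ q, p₁ ≤ q ∧ p₂ ≤ q ∧ p₃ ≤ q

variable {r : P → ℤ} {n k : ℤ}

namespace IsSaturatedRankMap

theorem exists_le_rank_eq (hr : IsSaturatedRankMap r n) {p : P} (hk : 1 ≤ k)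
    (hkp : k ≤ r p) (hpn : r p < n) : ∃ a ≤ p, r a = k := by
  rcases hkp.eq_or_lt with rfl | hkp
  · exact ⟨p, le_rfl, rfl⟩
  obtain ⟨-, a, -, ha, -, hra⟩ := hr.saturated p (r p + 1) k (by omega) (by omega) hkp hk
  exact ⟨a, ha, hra⟩

theorem exists_ub_of_rank_eq_max (hr : IsSaturatedRankMap r n) {p₁ p₂ p₃ : P}
    (h₃ : r p₃ = n) (u₂₃ : ∃ q, p₂ ≤ q ∧ p₃ ≤ q) (u₁₃ : ∃ q, p₁ ≤ q ∧ p₃ ≤ q) :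
    ∃ q, p₁ ≤ q ∧ p₂ ≤ q ∧ p₃ ≤ q := by
  have hmax : ∀ {q}, p₃ ≤ q → q = p₃ := fun hq =>
    (hr.strictMono.eq_of_le_of_apply_le hq (h₃ ▸ hr.rank_le _)).symm
  obtain ⟨q₂₃, hq₂, hq₃⟩ := u₂₃
  obtain ⟨q₁₃, hq₁, hq₃'⟩ := u₁₃
  exact ⟨p₃, hmax hq₃' ▸ hq₁, hmax hq₃ ▸ hq₂, le_rfl⟩

end IsSaturatedRankMap

/-- A center `zᵢ ≥ pᵢ, a` lies above rank `k` unless `zᵢ = a`, and then `pᵢ ≤ p₃`. -/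
theorem UpwardFlagAbove.exists_ub_of_ub_of_le (IH : UpwardFlagAbove r k)
    (hmono : StrictMono r) (hbow : BowtieFree P) {p₁ p₂ p₃ a W : P} (ha : a ≤ p₃) (hak : r a = k)
    (h₃ : k < r p₃) (hp₁W : p₁ ≤ W) (hp₂W : p₂ ≤ W) (haW : a ≤ W)
    (u₂₃ : ∃ q, p₂ ≤ q ∧ p₃ ≤ q) (u₁₃ : ∃ q, p₁ ≤ q ∧ p₃ ≤ q) :
    ∃ q, p₁ ≤ q ∧ p₂ ≤ q ∧ p₃ ≤ q := by
  obtain ⟨q₂₃, hq₂, hq₃⟩ := u₂₃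
  obtain ⟨q₁₃, hq₁, hq₃'⟩ := u₁₃
  obtain ⟨z₁, hpz₁, haz₁, hz₁W, hz₁q⟩ := hbow.exists_center hp₁W hq₁ haW (ha.trans hq₃')
  obtain ⟨z₂, hpz₂, haz₂, hz₂W, hz₂q⟩ := hbow.exists_center hp₂W hq₂ haW (ha.trans hq₃)
  rcases haz₁.lt_or_eq with haz₁ | rfl
  · rcases haz₂.lt_or_eq with haz₂ | rfl
    · obtain ⟨V, hz₁V, hz₂V, hp₃V⟩ := IH z₁ z₂ p₃ (hak ▸ hmono haz₁) (hak ▸ hmono haz₂) h₃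
        ⟨W, hz₁W, hz₂W⟩ ⟨q₂₃, hz₂q, hq₃⟩ ⟨q₁₃, hz₁q, hq₃'⟩
      exact ⟨V, hpz₁.trans hz₁V, hpz₂.trans hz₂V, hp₃V⟩
    · exact ⟨q₁₃, hq₁, hpz₂.trans (ha.trans hq₃'), hq₃'⟩
  · exact ⟨q₂₃, hpz₁.trans (ha.trans hq₃), hq₂, hq₃⟩

namespace IsSaturatedRankMap

theorem exists_ub_of_two_min_rank (hr : IsSaturatedRankMap r n) (hbow : BowtieFree P)
    (hlevel : ∀ k : ℤ, 1 ≤ k → k ≤ n - 1 → UpwardFlagAtRank r k) (IH : UpwardFlagAbove r k)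
    {p₁ p₂ p₃ : P} (h₁ : r p₁ = k) (h₂ : r p₂ = k) (h₃ : k ≤ r p₃)
    (u₁₂ : ∃ q, p₁ ≤ q ∧ p₂ ≤ q) (u₂₃ : ∃ q, p₂ ≤ q ∧ p₃ ≤ q)
    (u₁₃ : ∃ q, p₁ ≤ q ∧ p₃ ≤ q) :
    ∃ q, p₁ ≤ q ∧ p₂ ≤ q ∧ p₃ ≤ q := by
  rcases (hr.rank_le p₃).eq_or_lt with htop | hlt
  · exact hr.exists_ub_of_rank_eq_max htop u₂₃ u₁₃
  have hk : 1 ≤ k := h₁ ▸ hr.one_le_rank p₁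
  obtain ⟨a, ha, hak⟩ := hr.exists_le_rank_eq hk h₃ hlt
  obtain ⟨W, hp₁W, hp₂W, haW⟩ := hlevel k hk (by omega) p₁ p₂ a h₁ h₂ hak u₁₂
    (u₂₃.imp fun _ ⟨h, h'⟩ => ⟨h, ha.trans h'⟩) (u₁₃.imp fun _ ⟨h, h'⟩ => ⟨h, ha.trans h'⟩)
  rcases h₃.eq_or_lt with rfl | h₃
  · obtain rfl := hr.strictMono.eq_of_le_of_apply_le ha hak.ge
    exact ⟨W, hp₁W, hp₂W, haW⟩
  · exact IH.exists_ub_of_ub_of_le hr.strictMono hbow ha hak h₃ hp₁W hp₂W haW u₂₃ u₁₃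

theorem exists_ub_of_min_rank_lt (hr : IsSaturatedRankMap r n) (hbow : BowtieFree P)
    (hlevel : ∀ k : ℤ, 1 ≤ k → k ≤ n - 1 → UpwardFlagAtRank r k) (IH : UpwardFlagAbove r k)
    {p₁ p₂ p₃ : P} (h₁ : r p₁ = k) (h₂ : k < r p₂) (h₃ : k < r p₃)
    (u₁₂ : ∃ q, p₁ ≤ q ∧ p₂ ≤ q) (u₂₃ : ∃ q, p₂ ≤ q ∧ p₃ ≤ q)
    (u₁₃ : ∃ q, p₁ ≤ q ∧ p₃ ≤ q) :
    ∃ q, p₁ ≤ q ∧ p₂ ≤ q ∧ p₃ ≤ q := by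
  rcases (hr.rank_le p₃).eq_or_lt with htop | hlt
  · exact hr.exists_ub_of_rank_eq_max htop u₂₃ u₁₃
  obtain ⟨a, ha, hak⟩ := hr.exists_le_rank_eq (h₁ ▸ hr.one_le_rank p₁) h₃.le hlt
  obtain ⟨W, hp₁W, haW, hp₂W⟩ := hr.exists_ub_of_two_min_rank hbow hlevel IH h₁ hak h₂.le
    (u₁₃.imp fun _ ⟨h, h'⟩ => ⟨h, ha.trans h'⟩) (u₂₃.imp fun _ ⟨h, h'⟩ => ⟨ha.trans h', h⟩) u₁₂
  exact IH.exists_ub_of_ub_of_le hr.strictMono hbow ha hak h₃ hp₁W hp₂W haW u₂₃ u₁₃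

theorem exists_ub_of_min_rank (hr : IsSaturatedRankMap r n) (hbow : BowtieFree P)
    (hlevel : ∀ k : ℤ, 1 ≤ k → k ≤ n - 1 → UpwardFlagAtRank r k) (IH : UpwardFlagAbove r k)
    {p₁ p₂ p₃ : P} (h₁ : r p₁ = k) (h₂ : k ≤ r p₂) (h₃ : k ≤ r p₃)
    (u₁₂ : ∃ q, p₁ ≤ q ∧ p₂ ≤ q) (u₂₃ : ∃ q, p₂ ≤ q ∧ p₃ ≤ q)
    (u₁₃ : ∃ q, p₁ ≤ q ∧ p₃ ≤ q) :
    ∃ q, p₁ ≤ q ∧ p₂ ≤ q ∧ p₃ ≤ q := by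
  rcases h₂.eq_or_lt with h₂ | h₂
  · exact hr.exists_ub_of_two_min_rank hbow hlevel IH h₁ h₂.symm h₃ u₁₂ u₂₃ u₁₃
  rcases h₃.eq_or_lt with h₃ | h₃
  · obtain ⟨q, hp₁q, hp₃q, hp₂q⟩ := hr.exists_ub_of_two_min_rank hbow hlevel IH h₁ h₃.symm h₂.le
      u₁₃ (u₂₃.imp fun _ => And.symm) u₁₂
    exact ⟨q, hp₁q, hp₂q, hp₃q⟩
  · exact hr.exists_ub_of_min_rank_lt hbow hlevel IH h₁ h₂ h₃ u₁₂ u₂₃ u₁₃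

theorem upwardFlagAbove_sub_one (hr : IsSaturatedRankMap r n) (hbow : BowtieFree P)
    (hlevel : ∀ k : ℤ, 1 ≤ k → k ≤ n - 1 → UpwardFlagAtRank r k) (IH : UpwardFlagAbove r k) :
    UpwardFlagAbove r (k - 1) := by
  intro p₁ p₂ p₃ h₁ h₂ h₃ u₁₂ u₂₃ u₁₃
  rcases (by omega : r p₁ = k ∨ r p₂ = k ∨ r p₃ = k ∨ k < r p₁ ∧ k < r p₂ ∧ k < r p₃) with
    h | h | h | ⟨h₁, h₂, h₃⟩
  · exact hr.exists_ub_of_min_rank hbow hlevel IH h (by omega) (by omega) u₁₂ u₂₃ u₁₃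
  · obtain ⟨q, hp₂q, hp₁q, hp₃q⟩ := hr.exists_ub_of_min_rank hbow hlevel IH h
      (by omega) (by omega) (u₁₂.imp fun _ => And.symm) u₁₃ u₂₃
    exact ⟨q, hp₁q, hp₂q, hp₃q⟩
  · obtain ⟨q, hp₃q, hp₁q, hp₂q⟩ := hr.exists_ub_of_min_rank hbow hlevel IH h
      (by omega) (by omega) (u₁₃.imp fun _ => And.symm) u₁₂
      (u₂₃.imp fun _ => And.symm)
    exact ⟨q, hp₁q, hp₂q, hp₃q⟩
  · exact IH p₁ p₂ p₃ h₁ h₂ h₃ u₁₂ u₂₃ u₁₃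

theorem upwardFlagAbove (hr : IsSaturatedRankMap r n) (hbow : BowtieFree P)
    (hlevel : ∀ k : ℤ, 1 ≤ k → k ≤ n - 1 → UpwardFlagAtRank r k) (k : ℤ) :
    UpwardFlagAbove r k := by
  induction k using Int.inductionOn' (b := n) with
  | zero => exact fun p _ _ h _ _ _ _ _ => absurd (hr.rank_le p) (not_le.2 h)
  | succ k _ IH => exact fun p₁ p₂ p₃ h₁ h₂ h₃ => IH p₁ p₂ p₃ (by omega) (by omega) (by omega)
  | pred k _ IH => exact hr.upwardFlagAbove_sub_one hbow hlevel IH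

end IsSaturatedRankMap

end

/-- Let `P` be an `r`-saturated weakly graded poset whose rank map `r`
takes values between `1` and `n`.  Suppose (1) `P` is bowtie free; and (2) for every
integer `k` with `1 ≤ k ≤ n − 1`, any three pairwise upper-bounded elements of rank `k`
have a common upper bound.  Then `P` is upward flag. -/
theorem upwardFlag_of_levelled_triples {P : Type*} [PartialOrder P] (n : ℤ) (r : P → ℤ)
    (hmono : StrictMono r) (hlo : ∀ p : P, 1 ≤ r p) (hhi : ∀ p : P, r p ≤ n)
    (hsat : RSaturated r n)
    (h1 : BowtieFree P)
    (h2 : ∀ k : ℤ, 1 ≤ k → k ≤ n - 1 →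
      ∀ p₁ p₂ p₃ : P, r p₁ = k → r p₂ = k → r p₃ = k →
        (∃ q, p₁ ≤ q ∧ p₂ ≤ q) → (∃ q, p₂ ≤ q ∧ p₃ ≤ q) → (∃ q, p₁ ≤ q ∧ p₃ ≤ q) →
        ∃ q, p₁ ≤ q ∧ p₂ ≤ q ∧ p₃ ≤ q) :
    UpwardFlag P := by
  intro p₁ p₂ p₃
  exact IsSaturatedRankMap.upwardFlagAbove ⟨hmono, hlo, hhi, hsat⟩ h1 h2 0 p₁ p₂ p₃
    (hlo p₁) (hlo p₂) (hlo p₃)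
end
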